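/- The pairwise effective resistance R(i,j) on a finite connected graph with unit conductances, given by R = diag(L†)𝟙ᵀ + 𝟙 diag(L†)ᵀ − 2L† (entrywise: R(i,j) = L†(i,i) + L†(j,j) − 2L†(i,j)), is a metric on the vertex set. -/

import Mathlib

/-!
On a connected graph the range of `L` is exactly the space of zero-sum vectors (both have
codimension one, the kernel of `L` being the constants). Hence for any `B` with `L B L = L`, such as
`L†`, the potential `w = B (e_i - e_j)` satisfies `L w = e_i - e_j`, and
`R(i,j) = w i - w j = wᵀ L w`, which is nonnegative and vanishes only when `e_i = e_j`.
By the discrete maximum principle `w` is maximal at `i` and minimal at `j`, so every potential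
difference `w p - w q` is at most `R(i,j)`; expanding `R(i,k)` along
`e_i - e_k = (e_i - e_j) + (e_j - e_k)` gives the triangle inequality.
-/

open Matrix
open scoped Classical

namespace SimpleGraph

variable {V : Type*} [Fintype V] [DecidableEq V] {G : SimpleGraph V} [DecidableRel G.Adj]

theorem sum_lapMatrix_mulVec (x : V → ℝ) : ∑ i, (G.lapMatrix ℝ *ᵥ x) i = 0 := by
  have h : 1 ᵥ* G.lapMatrix ℝ = 0 := by
    rw [← mulVec_transpose, G.isSymm_lapMatrix ℝ]
    exact lapMatrix_mulVec_const_eq_zero G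
  rw [← dotProduct_one, dotProduct_comm, dotProduct_mulVec, h, zero_dotProduct]

theorem Connected.range_toLin'_lapMatrix (hG : G.Connected) :
    LinearMap.range (G.lapMatrix ℝ).toLin' =
      LinearMap.ker (∑ i : V, LinearMap.proj i : Module.Dual ℝ (V → ℝ)) := by
  set f : Module.Dual ℝ (V → ℝ) := ∑ i : V, LinearMap.proj i
  have hf : ∀ x, f x = ∑ i, x i := fun x ↦ by simp [f]
  obtain ⟨v⟩ := hG.nonempty
  have hf0 : f ≠ 0 := fun h ↦ by simpa [hf] using LinearMap.congr_fun h (Pi.single v 1)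
  have hker : Module.finrank ℝ (LinearMap.ker (G.lapMatrix ℝ).toLin') = 1 := by
    rw [← card_connectedComponent_eq_finrank_ker_toLin'_lapMatrix, Fintype.card_eq_one_iff]
    have := hG.preconnected.subsingleton_connectedComponent
    exact ⟨G.connectedComponentMk v, fun c ↦ Subsingleton.elim c _⟩
  refine Submodule.eq_of_le_of_finrank_eq ?_ ?_
  · rintro _ ⟨x, rfl⟩
    simp [hf, sum_lapMatrix_mulVec]
  · have h₁ := LinearMap.finrank_range_add_finrank_ker (G.lapMatrix ℝ).toLin'
    have h₂ := Module.Dual.finrank_ker_add_one_of_ne_zero hf0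
    rw [Module.finrank_fintype_fun_eq_card] at h₁ h₂
    omega

theorem Connected.exists_lapMatrix_mulVec_eq (hG : G.Connected) {x : V → ℝ}
    (hx : ∑ i, x i = 0) : ∃ y, G.lapMatrix ℝ *ᵥ y = x := by
  have : x ∈ LinearMap.range (G.lapMatrix ℝ).toLin' := by
    rw [hG.range_toLin'_lapMatrix]
    simpa using hx
  simpa using this

theorem Connected.apply_le_of_lapMatrix_mulVec_nonpos (hG : G.Connected) {x : V → ℝ} {i : V}
    (hx : ∀ c ≠ i, (G.lapMatrix ℝ *ᵥ x) c ≤ 0) (k : V) : x k ≤ x i := by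
  obtain ⟨m, -, hm⟩ := Finset.exists_max_image Finset.univ x ⟨i, Finset.mem_univ i⟩
  have hclosed : ∀ c d, G.Adj c d → x c = x m → c ≠ i → x d = x m := by
    intro c d hcd hc hci
    have hterms : ∀ u ∈ G.neighborFinset c, 0 ≤ x c - x u := fun u _ ↦ by
      rw [hc]; exact sub_nonneg.mpr (hm u (Finset.mem_univ u))
    have hsum : ∑ u ∈ G.neighborFinset c, (x c - x u) = 0 := by
      refine le_antisymm ?_ (Finset.sum_nonneg hterms)
      have := hx c hci
      rwa [lapMatrix_mulVec_apply, ← card_neighborFinset_eq_degree, ← nsmul_eq_mul,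
        ← Finset.sum_const, ← Finset.sum_sub_distrib] at this
    have := (Finset.sum_eq_zero_iff_of_nonneg hterms).mp hsum d
      ((G.mem_neighborFinset c d).mpr hcd)
    linarith
  have hi : x i = x m := by
    by_contra hne
    -- a walk from a maximiser to `i` has to leave the set of maximisers somewhere
    obtain ⟨w⟩ := hG.preconnected m i
    obtain ⟨e, -, he, he'⟩ := w.exists_boundary_dart {c | x c = x m} rfl hne
    exact he' (hclosed _ _ e.adj he fun h ↦ hne (h ▸ he))
  exact hi ▸ hm k (Finset.mem_univ k)

theorem Connected.apply_le_of_lapMatrix_mulVec_eq_single_sub_single (hG : G.Connected)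
    {x : V → ℝ} {a b : V} (hx : G.lapMatrix ℝ *ᵥ x = Pi.single a 1 - Pi.single b 1) (p : V) :
    x p ≤ x a :=
  hG.apply_le_of_lapMatrix_mulVec_nonpos (fun c hc ↦ by
    rw [hx, Pi.sub_apply, Pi.single_eq_of_ne hc, zero_sub, neg_nonpos]
    exact (Pi.single_nonneg.2 zero_le_one : (0 : V → ℝ) ≤ Pi.single b 1) c) p

theorem Connected.sub_le_of_lapMatrix_mulVec_eq_single_sub_single (hG : G.Connected)
    {x : V → ℝ} {a b : V} (hx : G.lapMatrix ℝ *ᵥ x = Pi.single a 1 - Pi.single b 1)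
    (p q : V) : x p - x q ≤ x a - x b := by
  have hmax : x p ≤ x a := hG.apply_le_of_lapMatrix_mulVec_eq_single_sub_single hx p
  have hmin : -x q ≤ -x b := hG.apply_le_of_lapMatrix_mulVec_eq_single_sub_single
    (by rw [mulVec_neg, hx, neg_sub]) q
  linarith

variable {B : Matrix V V ℝ}

theorem Connected.lapMatrix_mulVec_mulVec_of_mul_mul_eq (hG : G.Connected)
    (hB : G.lapMatrix ℝ * B * G.lapMatrix ℝ = G.lapMatrix ℝ) {x : V → ℝ} (hx : ∑ i, x i = 0) :
    G.lapMatrix ℝ *ᵥ (B *ᵥ x) = x := by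
  obtain ⟨y, rfl⟩ := hG.exists_lapMatrix_mulVec_eq hx
  rw [mulVec_mulVec, mulVec_mulVec, hB]

theorem Connected.dotProduct_mulVec_nonneg_of_mul_mul_eq (hG : G.Connected)
    (hB : G.lapMatrix ℝ * B * G.lapMatrix ℝ = G.lapMatrix ℝ) {x : V → ℝ} (hx : ∑ i, x i = 0) :
    0 ≤ x ⬝ᵥ (B *ᵥ x) := by
  have := (posSemidef_lapMatrix ℝ G).dotProduct_mulVec_nonneg (B *ᵥ x)
  rwa [star_trivial, dotProduct_comm, hG.lapMatrix_mulVec_mulVec_of_mul_mul_eq hB hx] at this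

theorem Connected.dotProduct_mulVec_eq_zero_iff_of_mul_mul_eq (hG : G.Connected)
    (hB : G.lapMatrix ℝ * B * G.lapMatrix ℝ = G.lapMatrix ℝ) {x : V → ℝ} (hx : ∑ i, x i = 0) :
    x ⬝ᵥ (B *ᵥ x) = 0 ↔ x = 0 := by
  have hLBx := hG.lapMatrix_mulVec_mulVec_of_mul_mul_eq hB hx
  have := (posSemidef_lapMatrix ℝ G).dotProduct_mulVec_zero_iff (B *ᵥ x)
  rwa [star_trivial, dotProduct_comm, hLBx] at this

theorem Connected.single_sub_single_dotProduct_mulVec_le (hG : G.Connected)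
    (hB : G.lapMatrix ℝ * B * G.lapMatrix ℝ = G.lapMatrix ℝ) (a b p q : V) :
    (Pi.single p 1 - Pi.single q 1) ⬝ᵥ (B *ᵥ (Pi.single a 1 - Pi.single b 1)) ≤
      (Pi.single a 1 - Pi.single b 1) ⬝ᵥ (B *ᵥ (Pi.single a 1 - Pi.single b 1)) := by
  simp only [sub_dotProduct, single_one_dotProduct]
  exact hG.sub_le_of_lapMatrix_mulVec_eq_single_sub_single
    (hG.lapMatrix_mulVec_mulVec_of_mul_mul_eq hB (by simp)) p q

end SimpleGraph

theorem stmt_18_general {V : Type*} [Fintype V] [DecidableEq V]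
    (G : SimpleGraph V) (hG : G.Connected)
    (Ldag : Matrix V V ℝ)
    (h1 : G.lapMatrix ℝ * Ldag * G.lapMatrix ℝ = G.lapMatrix ℝ)
    (R : V → V → ℝ)
    (hR : ∀ i j, R i j = dotProduct (Pi.single i 1 - Pi.single j 1)
      (Ldag.mulVec (Pi.single i 1 - Pi.single j 1))) :
    (∀ i j, 0 ≤ R i j) ∧
    (∀ i j, R i j = 0 ↔ i = j) ∧
    (∀ i j, R i j = R j i) ∧
    (∀ i j k, R i k ≤ R i j + R j k) := by
  have hsum (i j : V) : ∑ v, (Pi.single i 1 - Pi.single j 1 : V → ℝ) v = 0 := by simp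
  refine ⟨fun i j ↦ ?_, fun i j ↦ ?_, fun i j ↦ ?_, fun i j k ↦ ?_⟩
  · rw [hR]
    exact hG.dotProduct_mulVec_nonneg_of_mul_mul_eq h1 (hsum i j)
  · rw [hR, hG.dotProduct_mulVec_eq_zero_iff_of_mul_mul_eq h1 (hsum i j), sub_eq_zero]
    refine ⟨fun h ↦ ?_, fun h ↦ h ▸ rfl⟩
    simpa [Pi.single_apply, eq_comm] using congrFun h i
  · rw [hR, hR, ← neg_sub (Pi.single i 1), mulVec_neg, dotProduct_neg, neg_dotProduct, neg_neg]
  · have hsplit : (Pi.single i 1 - Pi.single k 1 : V → ℝ) =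
        (Pi.single i 1 - Pi.single j 1) + (Pi.single j 1 - Pi.single k 1) := by abel
    rw [hR, hR, hR]
    nth_rewrite 2 [hsplit]
    rw [mulVec_add, dotProduct_add]
    gcongr <;> exact hG.single_sub_single_dotProduct_mulVec_le h1 _ _ _ _

/-- For a finite connected graph with unit conductances, the pairwise effective
resistance `R(i,j) = (e_i - e_j)ᵀ L† (e_i - e_j)`, where `L†` is the Moore–Penrose
pseudoinverse of the combinatorial Laplacian, is a metric on the vertex set. -/
theorem stmt_18 {V : Type*} [Fintype V] [DecidableEq V]
    (G : SimpleGraph V) (hG : G.Connected)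
    (Ldag : Matrix V V ℝ)
    (h1 : G.lapMatrix ℝ * Ldag * G.lapMatrix ℝ = G.lapMatrix ℝ)
    (h2 : Ldag * G.lapMatrix ℝ * Ldag = Ldag)
    (h3 : (G.lapMatrix ℝ * Ldag)ᵀ = G.lapMatrix ℝ * Ldag)
    (h4 : (Ldag * G.lapMatrix ℝ)ᵀ = Ldag * G.lapMatrix ℝ)
    (R : V → V → ℝ)
    (hR : ∀ i j, R i j = dotProduct (Pi.single i 1 - Pi.single j 1)
      (Ldag.mulVec (Pi.single i 1 - Pi.single j 1))) :
    (∀ i j, 0 ≤ R i j) ∧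
    (∀ i j, R i j = 0 ↔ i = j) ∧
    (∀ i j, R i j = R j i) ∧
    (∀ i j k, R i k ≤ R i j + R j k) :=
  stmt_18_general G hG Ldag h1 R hR
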